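/- arXiv:math/0410415 — 2 statements merged into one kernel-verified Lean document; each statement's English description precedes it below -/
import Mathlib

section
/- For u_N(x,t) = (e^{N²t} − 1) sin(N x₁) and f_N(x,t) = N² sin(N x₁) on Q' = [−π,π]^n × (0,1), the ratio ‖D₁² u_N‖_{L²(Q')} / (‖u_N‖_{L²(Q')} + ‖f_N‖_{L²(Q')}) tends to infinity as N → ∞; in fact ‖D₁²u_N‖_{L²(Q')} ≥ c N e^{N²} while ‖u_N‖_{L²(Q')} + ‖f_N‖_{L²(Q')} ≤ C N^{−1} e^{N²} for large N, with constants c, C > 0 independent of N. -/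
open MeasureTheory Real Set Filter

/-! The three integrands separate variables, so each L² norm over `Q'` is `√((2π)^(n-1) π)`
times the L²(0,1) norm of its time factor: `N² ‖e^{N²t} - 1‖`, `‖e^{N²t} - 1‖` and `N²`.
Computing `∫₀¹ (e^{at} - 1)² dt` exactly shows that it lies between `e^{2a}/(4a)` and `e^{2a}/a`,
and `N³ ≤ e^{N²}`, so the ratio of norms is at least `N²/4`. -/

theorem integral_sin_nat_mul_sq_Icc {N : ℕ} (hN : N ≠ 0) :
    ∫ x in Icc (-π) π, sin (N * x) ^ 2 = π := by
  have hN' : (N : ℝ) ≠ 0 := Nat.cast_ne_zero.mpr hN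
  rw [integral_Icc_eq_integral_Ioc, ← intervalIntegral.integral_of_le (by linarith [pi_pos]),
    intervalIntegral.integral_comp_mul_left (fun y => sin y ^ 2) hN', integral_sin_sq,
    mul_neg, sin_neg, sin_nat_mul_pi, smul_eq_mul]
  field_simp
  ring

theorem setIntegral_univ_pi_comp_eval {ι α E : Type*} [Fintype ι] [MeasureSpace α]
    [SigmaFinite (volume : Measure α)] [NormedAddCommGroup E] [NormedSpace ℝ E]
    (s : Set α) (i : ι) {f : α → E} (hf : AEStronglyMeasurable f (volume.restrict s)) :
    ∫ x in univ.pi fun _ : ι => s, f (x i) =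
      volume.real s ^ (Fintype.card ι - 1) • ∫ x in s, f x := by
  classical
  rw [volume_pi, Measure.restrict_pi_pi, ← integral_map (measurable_pi_apply i).aemeasurable,
    Measure.pi_map_eval, integral_smul_measure]
  · simp [Finset.card_erase_of_mem, Measure.real, ENNReal.toReal_pow]
  · rw [Measure.pi_map_eval]
    exact hf.smul_measure _

theorem setIntegral_pi_Icc_prod_Ioo_sq_mul_sin {ι : Type*} [Fintype ι] (i : ι) {N : ℕ}
    (hN : N ≠ 0) (h : ℝ → ℝ) :
    ∫ z in (univ.pi fun _ : ι => Icc (-π) π) ×ˢ Ioo (0 : ℝ) 1,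
        (h z.2 * sin (N * z.1 i)) ^ 2 =
      (2 * π) ^ (Fintype.card ι - 1) * π * ∫ t in (0 : ℝ)..1, h t ^ 2 := by
  simp_rw [mul_pow (h _), mul_comm (h _ ^ 2)]
  rw [Measure.volume_eq_prod,
    setIntegral_prod_mul (fun x : ι → ℝ => sin (N * x i) ^ 2) (fun t => h t ^ 2),
    setIntegral_univ_pi_comp_eval _ i (f := fun x => sin (N * x) ^ 2) (by fun_prop),
    integral_sin_nat_mul_sq_Icc hN, ← integral_Ioc_eq_integral_Ioo,
    ← intervalIntegral.integral_of_le zero_le_one]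
  simp [two_mul, pi_pos.le]

theorem integral_exp_mul_sub_one_sq {a : ℝ} (ha : a ≠ 0) :
    ∫ t in (0 : ℝ)..1, (exp (a * t) - 1) ^ 2 =
      (exp a ^ 2 - 1) / (2 * a) - 2 * ((exp a - 1) / a) + 1 := by
  have hexp (c : ℝ) (hc : c ≠ 0) : ∫ t in (0 : ℝ)..1, exp (c * t) = (exp c - 1) / c := by
    rw [intervalIntegral.integral_comp_mul_left exp hc, integral_exp]
    simp only [smul_eq_mul, mul_zero, exp_zero]
    field_simp
  have hint (c : ℝ) : IntervalIntegrable (fun t => exp (c * t)) volume 0 1 := by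
    apply Continuous.intervalIntegrable; fun_prop
  have hexpand (t : ℝ) : (exp (a * t) - 1) ^ 2 = exp (2 * a * t) - 2 * exp (a * t) + 1 := by
    rw [mul_assoc, two_mul (a * t), exp_add]; ring
  have hsq : exp (2 * a) = exp a ^ 2 := by rw [sq, ← exp_add, two_mul]
  simp_rw [hexpand]
  rw [intervalIntegral.integral_add ((hint _).sub ((hint a).const_mul 2)) intervalIntegrable_const,
    intervalIntegral.integral_sub (hint _) ((hint a).const_mul 2),
    intervalIntegral.integral_const_mul, hexp _ (mul_ne_zero two_ne_zero ha), hexp a ha, hsq]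
  simp

theorem exp_sq_div_le_integral_exp_mul_sub_one_sq {a : ℝ} (ha : 3 ≤ a) :
    exp a ^ 2 / (4 * a) ≤ ∫ t in (0 : ℝ)..1, (exp (a * t) - 1) ^ 2 := by
  have h8 : 8 ≤ exp a := by nlinarith [quadratic_le_exp_of_nonneg (by linarith : (0 : ℝ) ≤ a)]
  rw [integral_exp_mul_sub_one_sq (by positivity), div_le_iff₀ (by positivity)]
  field_simp
  nlinarith [mul_nonneg (exp_pos a).le (sub_nonneg.mpr h8)]

theorem integral_exp_mul_sub_one_sq_le {a : ℝ} (ha : 0 < a) :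
    ∫ t in (0 : ℝ)..1, (exp (a * t) - 1) ^ 2 ≤ exp a ^ 2 / a := by
  have h1 : a + 1 ≤ exp a := add_one_le_exp a
  rw [integral_exp_mul_sub_one_sq ha.ne', le_div_iff₀ ha]
  field_simp
  nlinarith [mul_le_mul h1 h1 (by positivity) (exp_pos a).le]

theorem exp_sq_div_two_mul_le_sqrt_integral {x : ℝ} (hx : 2 ≤ x) :
    exp (x ^ 2) / (2 * x) ≤ √(∫ t in (0 : ℝ)..1, (exp (x ^ 2 * t) - 1) ^ 2) := by
  have hI := exp_sq_div_le_integral_exp_mul_sub_one_sq (a := x ^ 2) (by nlinarith)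
  rw [le_sqrt' (by positivity), div_pow, mul_pow]
  convert hI using 3
  norm_num

theorem sqrt_integral_le_exp_sq_div {x : ℝ} (hx : 0 < x) :
    √(∫ t in (0 : ℝ)..1, (exp (x ^ 2 * t) - 1) ^ 2) ≤ exp (x ^ 2) / x := by
  rw [sqrt_le_left (by positivity), div_pow]
  exact integral_exp_mul_sub_one_sq_le (by positivity)

theorem cube_le_exp_sq {x : ℝ} (hx : 0 ≤ x) : x ^ 3 ≤ exp (x ^ 2) := by
  have hx3 : x ≤ exp (x ^ 2 / 3) := by
    nlinarith [add_one_le_exp (x ^ 2 / 3), sq_nonneg (x - 3 / 2)]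
  calc x ^ 3 ≤ exp (x ^ 2 / 3) ^ 3 := by gcongr
    _ = exp (x ^ 2) := by rw [← exp_nat_mul]; ring_nf

theorem bounds_and_tendsto_div_atTop {a b e : ℕ → ℝ} {c C : ℝ} (hc : 0 < c) (hC : 0 < C)
    {N₀ : ℕ}
    (h : ∀ N, N₀ ≤ N → (c * N * e N ≤ a N ∧ b N ≤ C * (N : ℝ)⁻¹ * e N) ∧ 0 < b N) :
    (∀ N, N₀ ≤ N → c * N * e N ≤ a N ∧ b N ≤ C * (N : ℝ)⁻¹ * e N) ∧
      Tendsto (fun N => a N / b N) atTop atTop := by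
  refine ⟨fun N hN => (h N hN).1, ?_⟩
  have hN2 : Tendsto (fun N : ℕ => c / C * (N : ℝ) ^ 2) atTop atTop :=
    ((tendsto_pow_atTop two_ne_zero).comp tendsto_natCast_atTop_atTop).const_mul_atTop
      (div_pos hc hC)
  refine tendsto_atTop_mono' atTop ?_ hN2
  filter_upwards [eventually_ge_atTop N₀, eventually_ne_atTop 0] with N hN₀ hN
  obtain ⟨⟨haN, hbN⟩, hb⟩ := h N hN₀
  have hN' : (0 : ℝ) < N := by positivity
  rw [le_div_iff₀ hb]
  calc c / C * N ^ 2 * b N ≤ c / C * N ^ 2 * (C * (N : ℝ)⁻¹ * e N) := by gcongr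
    _ = c * N * e N := by field_simp
    _ ≤ a N := haN

/-- for `u_N(x,t) = (e^{N²t}-1) sin(N x₁)` and `f_N = N² sin(N x₁)` on
`Q' = [-π,π]^n × (0,1)`: `‖D₁²u_N‖_{L²} ≥ c N e^{N²}` while
`‖u_N‖_{L²} + ‖f_N‖_{L²} ≤ C N⁻¹ e^{N²}` for large `N`, hence the ratio
`‖D₁²u_N‖_{L²} / (‖u_N‖_{L²} + ‖f_N‖_{L²})` tends to infinity. -/
theorem backward_heat_estimate_fails (n : ℕ) (hn : 1 ≤ n) :
    ∀ Q' : Set ((Fin n → ℝ) × ℝ),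
      Q' = (Set.univ.pi fun _ : Fin n => Set.Icc (-π) π) ×ˢ Set.Ioo (0 : ℝ) 1 →
    ∃ c C : ℝ, 0 < c ∧ 0 < C ∧ ∃ N₀ : ℕ, (∀ N : ℕ, N₀ ≤ N →
      (c * N * Real.exp ((N : ℝ) ^ 2) ≤
        Real.sqrt (∫ z in Q',
          ((N : ℝ) ^ 2 * (Real.exp ((N : ℝ) ^ 2 * z.2) - 1) *
            Real.sin (N * z.1 ⟨0, hn⟩)) ^ 2)) ∧
      (Real.sqrt (∫ z in Q',
          ((Real.exp ((N : ℝ) ^ 2 * z.2) - 1) * Real.sin (N * z.1 ⟨0, hn⟩)) ^ 2) +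
        Real.sqrt (∫ z in Q', ((N : ℝ) ^ 2 * Real.sin (N * z.1 ⟨0, hn⟩)) ^ 2) ≤
        C * (N : ℝ)⁻¹ * Real.exp ((N : ℝ) ^ 2))) ∧
    Filter.Tendsto
      (fun N : ℕ =>
        Real.sqrt (∫ z in Q',
          ((N : ℝ) ^ 2 * (Real.exp ((N : ℝ) ^ 2 * z.2) - 1) *
            Real.sin (N * z.1 ⟨0, hn⟩)) ^ 2) /
        (Real.sqrt (∫ z in Q',
            ((Real.exp ((N : ℝ) ^ 2 * z.2) - 1) * Real.sin (N * z.1 ⟨0, hn⟩)) ^ 2) +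
          Real.sqrt (∫ z in Q', ((N : ℝ) ^ 2 * Real.sin (N * z.1 ⟨0, hn⟩)) ^ 2)))
      Filter.atTop Filter.atTop := by
  intro Q' hQ'
  set K := √((2 * π) ^ (n - 1) * π)
  have hK : 0 < K := by positivity
  have norm_eq (N : ℕ) (hN : N ≠ 0) (h : ℝ → ℝ) :
      √(∫ z in Q', (h z.2 * sin (N * z.1 ⟨0, hn⟩)) ^ 2) =
        K * √(∫ t in (0 : ℝ)..1, h t ^ 2) := by
    rw [hQ', setIntegral_pi_Icc_prod_Ioo_sq_mul_sin _ hN, Fintype.card_fin,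
      sqrt_mul (by positivity)]
  refine ⟨K / 2, 2 * K, by positivity, by positivity, 2,
    bounds_and_tendsto_div_atTop (by positivity) (by positivity) fun N hN => ?_⟩
  have hN0 : N ≠ 0 := by omega
  have hN2 : (2 : ℝ) ≤ N := by exact_mod_cast hN
  rw [norm_eq N hN0 (fun t => (N : ℝ) ^ 2 * (exp ((N : ℝ) ^ 2 * t) - 1)),
    norm_eq N hN0 (fun t => exp ((N : ℝ) ^ 2 * t) - 1), norm_eq N hN0 (fun _ => (N : ℝ) ^ 2)]
  have hN2sq : (0 : ℝ) ≤ (N : ℝ) ^ 2 := by positivity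
  simp only [mul_pow, intervalIntegral.integral_const_mul, intervalIntegral.integral_const,
    sub_zero, one_smul, sqrt_mul (pow_nonneg hN2sq 2), sqrt_sq hN2sq]
  set E := exp ((N : ℝ) ^ 2)
  set s := √(∫ t in (0 : ℝ)..1, (exp ((N : ℝ) ^ 2 * t) - 1) ^ 2)
  have hs_lower : E / (2 * N) ≤ s := exp_sq_div_two_mul_le_sqrt_integral hN2
  have hs_upper : s ≤ E / N := sqrt_integral_le_exp_sq_div (by positivity)
  have hcube : (N : ℝ) ^ 2 ≤ E / N := by
    rw [le_div_iff₀ (by positivity), ← pow_succ]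
    exact cube_le_exp_sq (by positivity)
  refine ⟨⟨?_, ?_⟩, by positivity⟩
  · calc K / 2 * N * E = K * (N ^ 2 * (E / (2 * N))) := by field_simp
      _ ≤ K * (N ^ 2 * s) := by gcongr
  · calc K * s + K * N ^ 2 ≤ K * (E / N) + K * (E / N) := by gcongr
      _ = 2 * K * (N : ℝ)⁻¹ * E := by ring
end

section
/- Vanishing of second derivatives of the heat kernel on the parabolic sphere: for the heat kernel G(x,t) = (4πt)^{−n/2} e^{−|x|²/(4t)} (t > 0, extended by 0 for t ≤ 0), the integral of Δ_x G over the unit sphere {(x,t) : max{|x|,|t|^{1/2}} = 1} with respect to surface measure equals the integral of D_t G over the same set; equivalently, ∫_{r₁ < ρ(x,t) < r₂} Δ_x G(x,t) dx dt = 0 for all 0 < r₁ < r₂, where ρ(x,t) = max{|x|, |t|^{1/2}}. -/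
open MeasureTheory
open scoped Real

/-- The heat kernel `G(x,t) = (4πt)^{-n/2} exp(-|x|²/(4t))` for `t > 0`, extended
by `0` for `t ≤ 0`. -/
noncomputable def heatKer (n : ℕ) (z : EuclideanSpace ℝ (Fin n) × ℝ) : ℝ :=
  if 0 < z.2 then (4 * π * z.2) ^ (-(n : ℝ) / 2) * Real.exp (-‖z.1‖ ^ 2 / (4 * z.2))
  else 0

/-- The spatial Laplacian `Δ_x G` at `z = (x,t)`. -/
noncomputable def heatKerLap (n : ℕ) (z : EuclideanSpace ℝ (Fin n) × ℝ) : ℝ :=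
  ∑ i : Fin n,
    iteratedDeriv 2 (fun s : ℝ => heatKer n (z.1 + s • EuclideanSpace.single i 1, z.2)) 0

/-! Let `P_p = heatProfile p`, i.e. `P_p(x,t) = t^p e^{-|x|²/4t}` for `t > 0` and `0` otherwise.
Both `Δ_x P_p` and `∂_t P_p` equal `|x|²/4 · P_{p-2}` plus a multiple of `P_{p-1}`, the multiples
being `-n/2` and `p`; at `p = -n/2`, where `G = (4π)^{-n/2} P_p`, this is the heat equation
`Δ_x G = ∂_t G`.

Away from the origin `P_p` is continuous (`t^p e^{-c/t} → 0` as `t → 0⁺` for `c > 0`), and the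
closed annulus avoids the origin, so `∂_t G` is integrable on it and we may integrate in `t`
first. For `|x| ≠ r₁` the time slice is an interval, and the fundamental theorem of calculus
turns the integral into `∫_{|x|<r₂} G(x,r₂²) dx - ∫_{|x|<r₁} G(x,r₁²) dx`. By the parabolic
scaling `G(rx, r²t) = r^{-n} G(x,t)`, `∫_{|x|<r} G(x,r²) dx` does not depend on `r`. -/

open Filter Set Metric
open scoped Topology

section HeatProfile

variable {E : Type*} [NormedAddCommGroup E]

noncomputable def heatProfile (p : ℝ) (z : E × ℝ) : ℝ :=
  if 0 < z.2 then z.2 ^ p * Real.exp (-‖z.1‖ ^ 2 / (4 * z.2)) else 0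

lemma heatProfile_of_nonpos (p : ℝ) {z : E × ℝ} (hz : z.2 ≤ 0) : heatProfile p z = 0 :=
  if_neg hz.not_gt

lemma heatProfile_nonneg (p : ℝ) (z : E × ℝ) : 0 ≤ heatProfile p z := by
  unfold heatProfile
  split_ifs <;> positivity

lemma heatProfile_le_of_norm_le (p : ℝ) {x y : E} (t : ℝ) (h : ‖y‖ ≤ ‖x‖) :
    heatProfile p (x, t) ≤ heatProfile p (y, t) := by
  unfold heatProfile
  split_ifs with ht
  · gcongr
  · rfl

lemma hasDerivAt_heatProfile (p : ℝ) (x : E) {t : ℝ} (ht : 0 < t) :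
    HasDerivAt (fun s => heatProfile p (x, s))
      (‖x‖ ^ 2 / 4 * heatProfile (p - 2) (x, t) + p * heatProfile (p - 1) (x, t)) t := by
  have hpow : HasDerivAt (fun s => s ^ p) (p * t ^ (p - 1)) t :=
    Real.hasDerivAt_rpow_const (Or.inl ht.ne')
  have hexp : HasDerivAt (fun s => Real.exp (-‖x‖ ^ 2 / (4 * s)))
      (Real.exp (-‖x‖ ^ 2 / (4 * t)) * (‖x‖ ^ 2 / (4 * t ^ 2))) t := by
    have := (hasDerivAt_inv ht.ne').const_mul (-‖x‖ ^ 2 / 4)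
    refine (this.congr_of_eventuallyEq ?_).exp.congr_deriv ?_
    · filter_upwards with s
      ring
    · field_simp
  refine ((hpow.mul hexp).congr_of_eventuallyEq ?_).congr_deriv ?_
  · filter_upwards [Ioi_mem_nhds ht] with s hs
    exact if_pos hs
  · simp only [heatProfile, if_pos ht]
    rw [Real.rpow_sub ht, Real.rpow_sub ht, Real.rpow_one, Real.rpow_two]
    field_simp
    ring

lemma tendsto_heatProfile_nhds_zero (p : ℝ) {x : E} (hx : x ≠ 0) :
    Tendsto (fun t => heatProfile p (x, t)) (𝓝 0) (𝓝 0) := by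
  suffices Tendsto (fun t => heatProfile p (x, t)) (𝓝[≤] 0 ⊔ 𝓝[>] 0) (𝓝 0) by
    rwa [nhdsLE_sup_nhdsGT] at this
  refine tendsto_sup.2 ⟨?_, ?_⟩
  · refine tendsto_const_nhds.congr' ?_
    filter_upwards [self_mem_nhdsWithin] with t (ht : t ≤ 0)
    exact (heatProfile_of_nonpos p ht).symm
  · have hc : 0 < ‖x‖ ^ 2 / 4 := by positivity
    refine ((tendsto_rpow_mul_exp_neg_mul_atTop_nhds_zero (-p) _ hc).comp
      tendsto_inv_nhdsGT_zero).congr' ?_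
    filter_upwards [self_mem_nhdsWithin] with t (ht : 0 < t)
    simp only [Function.comp, heatProfile, if_pos ht, Real.inv_rpow ht.le, Real.rpow_neg ht.le,
      inv_inv]
    ring_nf

lemma continuousAt_heatProfile [NormedSpace ℝ E] (p : ℝ) {z : E × ℝ} (hz : z ≠ 0) :
    ContinuousAt (heatProfile p) z := by
  obtain ⟨x, t⟩ := z
  rcases lt_trichotomy t 0 with ht | rfl | ht
  · refine (continuousAt_const (y := (0 : ℝ))).congr ?_
    filter_upwards [(isOpen_lt continuous_snd continuous_const).mem_nhds ht] with w hw
    exact (heatProfile_of_nonpos p hw.le).symm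
  · have hx : x ≠ 0 := by rintro rfl; exact hz rfl
    have hhalf : ‖(2⁻¹ : ℝ) • x‖ < ‖x‖ := by
      rw [norm_smul]
      norm_num
      linarith [norm_pos_iff.2 hx]
    rw [ContinuousAt, heatProfile_of_nonpos p le_rfl]
    have hbound := (tendsto_heatProfile_nhds_zero p (x := (2⁻¹ : ℝ) • x) (by simpa using hx)).comp
      (continuous_snd.continuousAt (x := (x, (0 : ℝ))))
    refine squeeze_zero' (Eventually.of_forall (heatProfile_nonneg p)) ?_ hbound
    filter_upwards [(isOpen_lt continuous_const (continuous_norm.comp continuous_fst)).mem_nhds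
      hhalf] with w hw
    exact heatProfile_le_of_norm_le p w.2 hw.le
  · have hform : ContinuousAt (fun w : E × ℝ => w.2 ^ p * Real.exp (-‖w.1‖ ^ 2 / (4 * w.2)))
        (x, t) := by
      have : ContinuousAt (fun w : E × ℝ => w.2 ^ p) (x, t) :=
        continuous_snd.continuousAt.rpow_const (Or.inl ht.ne')
      exact this.mul (by fun_prop (disch := positivity))
    refine hform.congr ?_
    filter_upwards [(isOpen_lt continuous_const continuous_snd).mem_nhds ht] with w hw
    exact (if_pos hw).symm

lemma heatProfile_smul [NormedSpace ℝ E] (p : ℝ) {r : ℝ} (hr : 0 < r) (x : E) (t : ℝ) :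
    heatProfile p (r • x, r ^ 2 * t) = (r ^ 2) ^ p * heatProfile p (x, t) := by
  unfold heatProfile
  simp only [norm_smul, Real.norm_eq_abs, abs_of_pos hr]
  by_cases ht : 0 < t
  · rw [if_pos (by positivity), if_pos ht, Real.mul_rpow (by positivity) ht.le]
    field_simp
  · rw [if_neg (by rwa [mul_pos_iff_of_pos_left (by positivity)]), if_neg ht, mul_zero]

end HeatProfile

lemma iteratedDeriv_two_exp_quadratic (a b c s : ℝ) :
    iteratedDeriv 2 (fun s => Real.exp (a + b * s + c * s ^ 2)) s
      = Real.exp (a + b * s + c * s ^ 2) * ((b + 2 * c * s) ^ 2 + 2 * c) := by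
  have hq : ∀ s : ℝ, HasDerivAt (fun s => a + b * s + c * s ^ 2) (b + 2 * c * s) s := by
    intro s
    exact ((((hasDerivAt_id s).const_mul b).const_add a).add
      ((hasDerivAt_pow 2 s).const_mul c)).congr_deriv (by simp; ring)
  have hlin : HasDerivAt (fun s => b + 2 * c * s) (2 * c) s := by
    simpa using ((hasDerivAt_id s).const_mul (2 * c)).const_add b
  rw [iteratedDeriv_succ, iteratedDeriv_one, funext fun s => ((hq s).exp).deriv]
  exact (((hq s).exp).mul hlin).deriv.trans (by ring)

section Laplacian

variable {n : ℕ}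

lemma heatProfile_add_smul_single (p : ℝ) (x : EuclideanSpace ℝ (Fin n)) (i : Fin n)
    {t : ℝ} (ht : 0 < t) (s : ℝ) :
    heatProfile p (x + s • EuclideanSpace.single i 1, t) =
      t ^ p * Real.exp (-‖x‖ ^ 2 / (4 * t) + -(x i / (2 * t)) * s + -(1 / (4 * t)) * s ^ 2) := by
  rw [heatProfile, if_pos ht, norm_add_sq_real, real_inner_smul_right,
    EuclideanSpace.inner_single_right, norm_smul, PiLp.norm_single, Real.norm_eq_abs,
    Real.norm_eq_abs, mul_pow, sq_abs, conj_trivial]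
  congr 2
  field_simp
  ring

lemma sum_iteratedDeriv_heatProfile (p : ℝ) (z : EuclideanSpace ℝ (Fin n) × ℝ) :
    ∑ i, iteratedDeriv 2
        (fun s : ℝ => heatProfile p (z.1 + s • EuclideanSpace.single i 1, z.2)) 0
      = ‖z.1‖ ^ 2 / 4 * heatProfile (p - 2) z - n / 2 * heatProfile (p - 1) z := by
  obtain ⟨x, t⟩ := z
  by_cases ht : 0 < t
  · simp only [heatProfile_add_smul_single p x _ ht, iteratedDeriv_const_mul_field,
      iteratedDeriv_two_exp_quadratic]
    simp only [heatProfile, if_pos ht, Real.rpow_sub ht, Real.rpow_one, Real.rpow_two,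
      zero_pow two_ne_zero, mul_zero, add_zero]
    rw [← Finset.mul_sum, ← Finset.mul_sum, Finset.sum_add_distrib]
    simp only [neg_sq, div_pow, ← Finset.sum_div, Finset.sum_const, Finset.card_univ,
      Fintype.card_fin, nsmul_eq_mul, ← EuclideanSpace.real_norm_sq_eq]
    field_simp
    ring
  · have h0 (q : ℝ) (y : EuclideanSpace ℝ (Fin n)) : heatProfile q (y, t) = 0 :=
      heatProfile_of_nonpos q (z := (y, t)) (not_lt.1 ht)
    simp [h0]

end Laplacian

lemma heatKer_eq_heatProfile (n : ℕ) (z : EuclideanSpace ℝ (Fin n) × ℝ) :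
    heatKer n z = (4 * π) ^ (-(n : ℝ) / 2) * heatProfile (-(n : ℝ) / 2) z := by
  unfold heatKer heatProfile
  split_ifs with hz
  · rw [Real.mul_rpow (by positivity) hz.le, mul_assoc]
  · rw [mul_zero]

noncomputable def heatKerDt (n : ℕ) (z : EuclideanSpace ℝ (Fin n) × ℝ) : ℝ :=
  (4 * π) ^ (-(n : ℝ) / 2) * (‖z.1‖ ^ 2 / 4 * heatProfile (-(n : ℝ) / 2 - 2) z
    - n / 2 * heatProfile (-(n : ℝ) / 2 - 1) z)

lemma heatKerLap_eq_heatKerDt (n : ℕ) (z : EuclideanSpace ℝ (Fin n) × ℝ) :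
    heatKerLap n z = heatKerDt n z := by
  simp only [heatKerLap, heatKer_eq_heatProfile, iteratedDeriv_const_mul_field, ← Finset.mul_sum,
    sum_iteratedDeriv_heatProfile, heatKerDt]

section HeatKernel

variable {n : ℕ}

lemma hasDerivAt_heatKer (x : EuclideanSpace ℝ (Fin n)) {t : ℝ} (ht : 0 < t) :
    HasDerivAt (fun s => heatKer n (x, s)) (heatKerDt n (x, t)) t := by
  simp only [heatKer_eq_heatProfile]
  refine ((hasDerivAt_heatProfile _ x ht).const_mul _).congr_deriv ?_
  rw [heatKerDt]
  ring

lemma heatKer_of_nonpos {z : EuclideanSpace ℝ (Fin n) × ℝ} (hz : z.2 ≤ 0) : heatKer n z = 0 := by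
  rw [heatKer_eq_heatProfile, heatProfile_of_nonpos _ hz, mul_zero]

lemma heatKerDt_of_nonpos {z : EuclideanSpace ℝ (Fin n) × ℝ} (hz : z.2 ≤ 0) :
    heatKerDt n z = 0 := by
  simp only [heatKerDt, heatProfile_of_nonpos _ hz, mul_zero, sub_zero]

lemma continuousAt_heatKer {z : EuclideanSpace ℝ (Fin n) × ℝ} (hz : z ≠ 0) :
    ContinuousAt (heatKer n) z := by
  simp only [funext (heatKer_eq_heatProfile n)]
  exact (continuousAt_heatProfile _ hz).const_mul _

lemma continuousAt_heatKerDt {z : EuclideanSpace ℝ (Fin n) × ℝ} (hz : z ≠ 0) :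
    ContinuousAt (heatKerDt n) z := by
  have := continuousAt_heatProfile (-(n : ℝ) / 2 - 2) hz
  have := continuousAt_heatProfile (-(n : ℝ) / 2 - 1) hz
  unfold heatKerDt
  fun_prop

lemma integral_Ioo_heatKerDt {x : EuclideanSpace ℝ (Fin n)} {a b : ℝ} (ha : 0 ≤ a) (hab : a ≤ b)
    (hx : x ≠ 0 ∨ 0 < a) :
    ∫ t in Ioo a b, heatKerDt n (x, t) = heatKer n (x, b) - heatKer n (x, a) := by
  have hne : ∀ t ∈ Icc a b, (x, t) ≠ 0 := by
    rintro t ⟨hat, -⟩ h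
    rw [Prod.mk_eq_zero] at h
    rcases hx with hx | ha
    · exact hx h.1
    · linarith [h.2]
  have hcont {f : EuclideanSpace ℝ (Fin n) × ℝ → ℝ} (hf : ∀ z ≠ 0, ContinuousAt f z) :
      ContinuousOn (fun t => f (x, t)) (Icc a b) := fun t ht =>
    ((hf _ (hne t ht)).comp (Continuous.prodMk_right x).continuousAt).continuousWithinAt
  rw [← integral_Ioc_eq_integral_Ioo, ← intervalIntegral.integral_of_le hab]
  exact intervalIntegral.integral_eq_sub_of_hasDerivAt_of_le hab
    (hcont fun _ => continuousAt_heatKer) (fun t ht => hasDerivAt_heatKer x (ha.trans_lt ht.1))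
    ((hcont fun _ => continuousAt_heatKerDt).intervalIntegrable_of_Icc hab)

lemma heatKer_smul {r : ℝ} (hr : 0 < r) (x : EuclideanSpace ℝ (Fin n)) (t : ℝ) :
    heatKer n (r • x, r ^ 2 * t) = r ^ (-(n : ℝ)) * heatKer n (x, t) := by
  rw [heatKer_eq_heatProfile, heatKer_eq_heatProfile, heatProfile_smul _ hr, ← Real.rpow_natCast,
    ← Real.rpow_mul hr.le]
  push_cast
  ring_nf

end HeatKernel

section ParabolicNorm

variable {E : Type*} [NormedAddCommGroup E]

noncomputable def parabolicNorm (z : E × ℝ) : ℝ := max ‖z.1‖ (|z.2| ^ (1 / 2 : ℝ))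

lemma parabolicNorm_zero : parabolicNorm (0 : E × ℝ) = 0 := by
  simp [parabolicNorm]

lemma parabolicNorm_eq (z : E × ℝ) : parabolicNorm z = max ‖z.1‖ √|z.2| := by
  rw [Real.sqrt_eq_rpow, parabolicNorm]

lemma continuous_parabolicNorm : Continuous (parabolicNorm (E := E)) := by
  simp only [funext parabolicNorm_eq]
  fun_prop

lemma parabolicNorm_lt_iff {z : E × ℝ} {r : ℝ} (hr : 0 < r) :
    parabolicNorm z < r ↔ ‖z.1‖ < r ∧ |z.2| < r ^ 2 := by
  rw [parabolicNorm_eq, max_lt_iff, Real.sqrt_lt' hr]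

lemma lt_parabolicNorm_iff {z : E × ℝ} {r : ℝ} (hr : 0 ≤ r) :
    r < parabolicNorm z ↔ r < ‖z.1‖ ∨ r ^ 2 < |z.2| := by
  rw [parabolicNorm_eq, lt_max_iff, Real.lt_sqrt hr]

lemma isCompact_parabolicNorm_le [ProperSpace E] (R : ℝ) :
    IsCompact {z : E × ℝ | parabolicNorm z ≤ R} := by
  have hbox := (isCompact_closedBall (0 : E) R).prod (isCompact_Icc (a := -R ^ 2) (b := R ^ 2))
  refine hbox.of_isClosed_subset (isClosed_le continuous_parabolicNorm continuous_const)
    fun z hz => ?_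
  simp only [mem_ofPred_eq, parabolicNorm_eq, max_le_iff, Real.sqrt_le_iff] at hz
  exact ⟨mem_closedBall_zero_iff.2 hz.1, abs_le.1 hz.2.2⟩

end ParabolicNorm

lemma integrableOn_heatKerDt_parabolicAnnulus (n : ℕ) {r₁ r₂ : ℝ} (h₁ : 0 < r₁) :
    IntegrableOn (heatKerDt n) (parabolicNorm ⁻¹' Ioo r₁ r₂) := by
  have hK : IsCompact (parabolicNorm ⁻¹' Icc r₁ r₂ : Set (EuclideanSpace ℝ (Fin n) × ℝ)) :=
    (isCompact_parabolicNorm_le r₂).of_isClosed_subset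
      (isClosed_Icc.preimage continuous_parabolicNorm) fun z hz => hz.2
  refine (ContinuousOn.integrableOn_compact hK fun z hz => ?_).mono_set
    (preimage_mono Ioo_subset_Icc_self)
  refine (continuousAt_heatKerDt ?_).continuousWithinAt
  rintro rfl
  exact h₁.not_ge (by simpa [parabolicNorm_zero] using hz.1)

lemma integral_indicator_heatKerDt_eq_of_slice {n : ℕ} {s : Set (EuclideanSpace ℝ (Fin n) × ℝ)}
    {x : EuclideanSpace ℝ (Fin n)} {a b : ℝ} (ha : 0 ≤ a) (hab : a ≤ b) (hx : x ≠ 0 ∨ 0 < a)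
    (hs : ∀ t, 0 < t → ((x, t) ∈ s ↔ t ∈ Ioo a b)) :
    ∫ t, s.indicator (heatKerDt n) (x, t) = heatKer n (x, b) - heatKer n (x, a) := by
  have hslice : (fun t => s.indicator (heatKerDt n) (x, t))
      = (Ioo a b).indicator (fun t => heatKerDt n (x, t)) := by
    funext t
    rcases le_or_gt t 0 with ht | ht
    · have hnot : t ∉ Ioo a b := fun h => (ha.trans_lt h.1).not_ge ht
      rw [indicator_of_notMem hnot, indicator_apply_eq_zero]
      exact fun _ => heatKerDt_of_nonpos ht
    · simp only [indicator, hs t ht]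
  rw [hslice, integral_indicator measurableSet_Ioo, integral_Ioo_heatKerDt ha hab hx]

lemma integral_indicator_heatKerDt_parabolicAnnulus {n : ℕ} {r₁ r₂ : ℝ} (h₁ : 0 < r₁)
    (h₂ : r₁ < r₂) {x : EuclideanSpace ℝ (Fin n)} (hx : ‖x‖ ≠ r₁) :
    ∫ t, (parabolicNorm ⁻¹' Ioo r₁ r₂).indicator (heatKerDt n) (x, t)
      = (ball 0 r₂).indicator (fun y => heatKer n (y, r₂ ^ 2)) x
        - (ball 0 r₁).indicator (fun y => heatKer n (y, r₁ ^ 2)) x := by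
  have hmem : ∀ t, 0 < t → ((x, t) ∈ parabolicNorm ⁻¹' Ioo r₁ r₂ ↔
      (r₁ < ‖x‖ ∨ r₁ ^ 2 < t) ∧ ‖x‖ < r₂ ∧ t < r₂ ^ 2) := fun t ht => by
    simp only [mem_preimage, mem_Ioo, lt_parabolicNorm_iff h₁.le,
      parabolicNorm_lt_iff (h₁.trans h₂), abs_of_pos ht]
  have hr : r₁ ^ 2 < r₂ ^ 2 := by gcongr
  -- The positive-time slice over `x` is `(r₁², r₂²)`, `(0, r₂²)` or empty according as
  -- `‖x‖ < r₁`, `r₁ < ‖x‖ < r₂` or `r₂ ≤ ‖x‖`.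
  rcases hx.lt_or_gt with hx | hx
  · rw [integral_indicator_heatKerDt_eq_of_slice (a := r₁ ^ 2) (by positivity) hr.le
      (Or.inr (by positivity)) fun t ht => by rw [hmem t ht, mem_Ioo]; constructor <;> grind]
    simp [indicator, hx, hx.trans h₂]
  have hx0 : x ≠ 0 := norm_pos_iff.1 (h₁.trans hx)
  rcases lt_or_ge ‖x‖ r₂ with hx₂ | hx₂
  · rw [integral_indicator_heatKerDt_eq_of_slice (a := 0) (b := r₂ ^ 2) le_rfl (by positivity)
      (Or.inl hx0) fun t ht => by rw [hmem t ht, mem_Ioo]; constructor <;> grind]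
    simp [indicator, hx₂, hx.not_gt, heatKer_of_nonpos]
  · rw [integral_indicator_heatKerDt_eq_of_slice (a := 0) (b := 0) le_rfl le_rfl (Or.inl hx0)
      fun t ht => by rw [hmem t ht, mem_Ioo]; constructor <;> grind]
    simp [indicator, hx₂.not_gt, (h₂.trans_le hx₂).not_gt]

lemma integrableOn_ball_heatKer {n : ℕ} {r t : ℝ} (ht : 0 < t) :
    IntegrableOn (fun x => heatKer n (x, t)) (ball (0 : EuclideanSpace ℝ (Fin n)) r) := by
  refine (ContinuousOn.integrableOn_compact (isCompact_closedBall 0 r) fun x _ => ?_).mono_set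
    ball_subset_closedBall
  exact ((continuousAt_heatKer (by simp [ht.ne'])).comp
    (Continuous.prodMk_left t).continuousAt).continuousWithinAt

lemma setIntegral_ball_heatKer (n : ℕ) {r : ℝ} (hr : 0 < r) :
    ∫ x in ball (0 : EuclideanSpace ℝ (Fin n)) r, heatKer n (x, r ^ 2)
      = ∫ x in ball (0 : EuclideanSpace ℝ (Fin n)) 1, heatKer n (x, 1) := by
  have h := Measure.setIntegral_comp_smul_of_pos volume (fun x => heatKer n (x, r ^ 2))
    (ball 0 1) hr
  have hsmul (x : EuclideanSpace ℝ (Fin n)) :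
      heatKer n (r • x, r ^ 2) = (r ^ n)⁻¹ * heatKer n (x, 1) := by
    simpa [Real.rpow_neg hr.le] using heatKer_smul hr x 1
  simp only [smul_unitBall_of_pos hr, finrank_euclideanSpace_fin, hsmul, integral_const_mul,
    smul_eq_mul] at h
  exact (mul_left_cancel₀ (by positivity) h).symm

theorem heat_kernel_cancellation_general (n : ℕ) (r₁ r₂ : ℝ)
    (h₁ : 0 < r₁) (h₂ : r₁ < r₂) :
    ∫ z in {z : EuclideanSpace ℝ (Fin n) × ℝ |
        r₁ < max ‖z.1‖ (|z.2| ^ (1 / 2 : ℝ)) ∧ max ‖z.1‖ (|z.2| ^ (1 / 2 : ℝ)) < r₂},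
      heatKerLap n z = 0 := by
  change ∫ z in parabolicNorm ⁻¹' Ioo r₁ r₂, heatKerLap n z = 0
  have hA : MeasurableSet (parabolicNorm ⁻¹' Ioo r₁ r₂ : Set (EuclideanSpace ℝ (Fin n) × ℝ)) :=
    measurableSet_Ioo.preimage continuous_parabolicNorm.measurable
  have hball {r : ℝ} (hr : 0 < r) :
      Integrable ((ball (0 : EuclideanSpace ℝ (Fin n)) r).indicator
        fun x => heatKer n (x, r ^ 2)) :=
    (integrable_indicator_iff measurableSet_ball).2 (integrableOn_ball_heatKer (by positivity))
  have hsphere : ∀ᵐ x : EuclideanSpace ℝ (Fin n), ‖x‖ ≠ r₁ := by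
    simpa using measure_eq_zero_iff_ae_notMem.1 (Measure.addHaar_sphere_of_ne_zero volume
      (0 : EuclideanSpace ℝ (Fin n)) h₁.ne')
  calc ∫ z in parabolicNorm ⁻¹' Ioo r₁ r₂, heatKerLap n z
      = ∫ x, ∫ t, (parabolicNorm ⁻¹' Ioo r₁ r₂).indicator (heatKerDt n) (x, t) := by
        simp only [heatKerLap_eq_heatKerDt]
        rw [← integral_indicator hA, Measure.volume_eq_prod, integral_prod]
        exact (integrable_indicator_iff hA).2 (integrableOn_heatKerDt_parabolicAnnulus n h₁)
    _ = ∫ x, ((ball 0 r₂).indicator (fun y => heatKer n (y, r₂ ^ 2)) x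
          - (ball 0 r₁).indicator (fun y => heatKer n (y, r₁ ^ 2)) x) := by
        refine integral_congr_ae ?_
        filter_upwards [hsphere] with x hx
        exact integral_indicator_heatKerDt_parabolicAnnulus h₁ h₂ hx
    _ = 0 := by
        rw [integral_sub (hball (h₁.trans h₂)) (hball h₁), integral_indicator measurableSet_ball,
          integral_indicator measurableSet_ball, setIntegral_ball_heatKer n (h₁.trans h₂),
          setIntegral_ball_heatKer n h₁, sub_self]

/-- cancellation property 𝒫₃ for the heat kernel: the integral of
`Δ_x G` over any parabolic annulus `{r₁ < ρ(x,t) < r₂}`,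
`ρ(x,t) = max{|x|, |t|^{1/2}}`, vanishes. -/
theorem heat_kernel_cancellation (n : ℕ) (hn : 1 ≤ n) (r₁ r₂ : ℝ)
    (h₁ : 0 < r₁) (h₂ : r₁ < r₂) :
    ∫ z in {z : EuclideanSpace ℝ (Fin n) × ℝ |
        r₁ < max ‖z.1‖ (|z.2| ^ (1 / 2 : ℝ)) ∧ max ‖z.1‖ (|z.2| ^ (1 / 2 : ℝ)) < r₂},
      heatKerLap n z = 0 :=
  heat_kernel_cancellation_general n r₁ r₂ h₁ h₂
end
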